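/- If φ: M → N is a flat epimorphism of finite presentation of commutative monoids, then there exists a ∈ M such that N is isomorphic as an M-algebra to the localization M_a. Conversely, every localization M → M_a is a flat epimorphism of finite presentation. -/

import Mathlib

open CategoryTheory CategoryTheory.Limits Opposite

section
open Relation
variable {M N : Type} [CommMonoid M] [CommMonoid N]

/-- The generating relation for the base change `T ⊗_M N` of an `M`-set `T` along
`φ : M →* N`: `(m • t, n) ∼ (t, φ(m) n)`. -/
inductive TensorRel (φ : M →* N) (T : Type) [MulAction M T] : T × N → T × N → Prop
  | mk (m : M) (t : T) (n : N) : TensorRel φ T (m • t, n) (t, φ m * n)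

/-- The base change `T ⊗_M N` of an `M`-set `T` along `φ : M →* N`:
the quotient of `T × N` by the equivalence relation generated by
`(m • t, n) ∼ (t, φ(m) n)`; it carries the `N`-action on the second factor. -/
abbrev MTensor (φ : M →* N) (T : Type) [MulAction M T] : Type :=
  Quotient (EqvGen.setoid (TensorRel φ T))

/-- The class of `(t, n)` in `T ⊗_M N`. -/
def MTensor.mk (φ : M →* N) {T : Type} [MulAction M T] (t : T) (n : N) :
    MTensor φ T :=
  Quotient.mk (EqvGen.setoid (TensorRel φ T)) (t, n)

/-- The map `T ⊗_M N → U ⊗_M N` induced by a map of `M`-sets `f : T → U`. -/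
def MTensor.map (φ : M →* N) {T U : Type} [MulAction M T] [MulAction M U]
    (f : T →[M] U) : MTensor φ T → MTensor φ U :=
  Quotient.lift (fun p => MTensor.mk φ (f p.1) p.2) (by
    intro a b h
    induction h with
    | rel x y hxy =>
      obtain ⟨m, t, n⟩ := hxy
      refine Quotient.sound ?_
      show EqvGen (TensorRel φ U) (f (m • t), n) (f t, φ m * n)
      rw [map_smul]
      exact EqvGen.rel _ _ (TensorRel.mk m (f t) n)
    | refl x => rfl
    | symm x y _ ih => exact ih.symm
    | trans x y z _ _ ih₁ ih₂ => exact ih₁.trans ih₂)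

/-- The comparison map `(T × U) ⊗_M N → (T ⊗_M N) × (U ⊗_M N)`. -/
def tensorProdCompare (φ : M →* N) (T U : Type) [MulAction M T] [MulAction M U] :
    MTensor φ (T × U) → MTensor φ T × MTensor φ U :=
  Quotient.lift (fun p => (MTensor.mk φ p.1.1 p.2, MTensor.mk φ p.1.2 p.2)) (by
    intro a b h
    induction h with
    | rel x y hxy =>
      obtain ⟨m, t, n⟩ := hxy
      exact Prod.ext (Quotient.sound (EqvGen.rel _ _ (TensorRel.mk m t.1 n)))
        (Quotient.sound (EqvGen.rel _ _ (TensorRel.mk m t.2 n)))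
    | refl x => rfl
    | symm x y _ ih => exact ih.symm
    | trans x y z _ _ ih₁ ih₂ => exact ih₁.trans ih₂)

/-- The equalizer of two maps of `M`-sets is an `M`-set. -/
instance tensorEqMulAction {T U : Type} [MulAction M T] [MulAction M U]
    (f g : T →[M] U) : MulAction M {t : T // f t = g t} where
  smul m t := ⟨m • t.1, by rw [map_smul, map_smul, t.2]⟩
  one_smul t := Subtype.ext (one_smul M t.1)
  mul_smul a b t := Subtype.ext (mul_smul a b t.1)

/-- The inclusion of the equalizer, as a map of `M`-sets. -/
def tensorEqIncl {T U : Type} [MulAction M T] [MulAction M U] (f g : T →[M] U) :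
    {t : T // f t = g t} →[M] T :=
  ⟨Subtype.val, fun _ _ => rfl⟩

/-- The comparison map from `E ⊗_M N` (`E` the equalizer of `f, g`) to the equalizer
of the induced maps `T ⊗_M N ⇉ U ⊗_M N`. -/
def tensorEqCompare (φ : M →* N) {T U : Type} [MulAction M T] [MulAction M U]
    (f g : T →[M] U) : MTensor φ {t : T // f t = g t} →
      {x : MTensor φ T // MTensor.map φ f x = MTensor.map φ g x} :=
  fun y => ⟨MTensor.map φ (tensorEqIncl f g) y, by
    induction y using Quotient.inductionOn with
    | h p =>
      show MTensor.mk φ (f p.1.1) p.2 = MTensor.mk φ (g p.1.1) p.2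
      rw [p.1.2]⟩

/-- `φ : M →* N` is flat: the base change functor `(− ⊗_M N)` from `M`-sets to `N`-sets
preserves finite limits, i.e. binary products, the terminal object and equalizers. -/
def MonFlat (φ : M →* N) : Prop :=
  (∀ (T U : Type) [MulAction M T] [MulAction M U],
      Function.Bijective (tensorProdCompare φ T U)) ∧
  (Nonempty (MTensor φ PUnit) ∧ Subsingleton (MTensor φ PUnit)) ∧
  (∀ (T U : Type) [MulAction M T] [MulAction M U] (f g : T →[M] U),
      Function.Bijective (tensorEqCompare φ f g))

end

/-- `φ` is an epimorphism in the category of commutative monoids: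
it is right-cancellable. -/
def MonEpi {M N : Type} [CommMonoid M] [CommMonoid N] (φ : M →* N) : Prop :=
  ∀ (P : Type) [CommMonoid P] (f g : N →* P), f.comp φ = g.comp φ → f = g

/-- `φ : M →* N` is of finite presentation: the functor `Hom_{M-alg}(N, −)` on the
category of `M`-algebras (the under category of `M` in commutative monoids)
preserves filtered colimits. -/
def MonFinitePresentation {M N : Type} [CommMonoid M] [CommMonoid N] (φ : M →* N) : Prop :=
  PreservesFilteredColimits (coyoneda.obj (op (Under.mk (CommMonCat.ofHom φ))))

/-!
For a localization `M → S⁻¹M`, the base change `T ⊗_M S⁻¹M` is the Ore localization `S⁻¹T`: every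
element is `t ⊗ 1/s`, and `t ⊗ 1/s = t' ⊗ 1/s` iff `c • t = c • t'` for some `c ∈ S`. This
description visibly commutes with finite products, the terminal object and equalizers.

Conversely, let `φ : M → N` be flat and `S = φ⁻¹(Nˣ)`. Preservation of equalizers gives
`φ u = φ v → ∃ c ∈ S, c u = c v`, preservation of products and equalizers lets one refine any
equation `φ u · x = φ v · x'` through a common divisor, and preservation of the terminal object then
writes every `n` as `φ m / φ m'`. So `φ` is the localization `M → S⁻¹M`, which is the filtered
colimit of the `M_a`, `a ∈ S`. Finite presentation makes `𝟙_N` factor through some `M_a`, and since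
`M → M_a` is an epimorphism, the factorization is an isomorphism `N ≅ M_a`.
-/

namespace MTensor

variable {M N : Type} [CommMonoid M] [CommMonoid N] (φ : M →* N) {T : Type} [MulAction M T]

theorem mk_smul (m : M) (t : T) (n : N) : mk φ (m • t) n = mk φ t (φ m * n) :=
  Quotient.sound (Relation.EqvGen.rel _ _ (TensorRel.mk m t n))

theorem exists_mk (x : MTensor φ T) : ∃ t n, mk φ t n = x :=
  Quotient.inductionOn x fun p => ⟨p.1, p.2, rfl⟩

def lift {α : Sort*} (f : T → N → α) (hf : ∀ m t n, f (m • t) n = f t (φ m * n)) :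
    MTensor φ T → α :=
  Quotient.lift (fun p => f p.1 p.2) fun _ _ h =>
    congrArg (Quot.lift (fun p => f p.1 p.2) fun _ _ ⟨m, t, n⟩ => hf m t n) (Quot.eqvGen_sound h)

theorem lift_mk {α : Sort*} (f : T → N → α) (hf : ∀ m t n, f (m • t) n = f t (φ m * n))
    (t : T) (n : N) : lift φ f hf (mk φ t n) = f t n := rfl

theorem mk_one_injective : Function.Injective (mk φ (1 : M)) := by
  have hinv : Function.LeftInverse (lift φ (fun m n => φ m * n) fun m t n => by
      rw [smul_eq_mul, map_mul, mul_assoc, mul_left_comm]) (mk φ 1) :=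
    fun n => by rw [lift_mk, map_one, one_mul]
  exact hinv.injective

theorem mk_eq_mk_one (m : M) (n : N) : mk φ m n = mk φ 1 (φ m * n) := by
  rw [← mk_smul, smul_eq_mul, mul_one]

theorem mk_eq_mk_one_iff {m : M} {n x : N} : mk φ m n = mk φ 1 x ↔ φ m * n = x := by
  rw [mk_eq_mk_one]
  exact (mk_one_injective φ).eq_iff

end MTensor

theorem tensorProdCompare_mk {M N : Type} [CommMonoid M] [CommMonoid N] (φ : M →* N)
    {T U : Type} [MulAction M T] [MulAction M U] (p : T × U) (n : N) :
    tensorProdCompare φ T U (MTensor.mk φ p n) = (MTensor.mk φ p.1 n, MTensor.mk φ p.2 n) := rfl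

section Localization

variable {M : Type} [CommMonoid M] (S : Submonoid M)

abbrev locMap : M →* Localization S := (Localization.monoidOf S).toMonoidHom

theorem locMap_mul_mk (m : M) (s : S) : locMap S m * Localization.mk 1 s = Localization.mk m s := by
  change Localization.mk m 1 * _ = _
  rw [Localization.mk_mul, mul_one, one_mul]

namespace MTensor

variable {T : Type} [MulAction M T]

def toOreLocalization : MTensor (locMap S) T → OreLocalization S T :=
  lift (locMap S) (fun t x => x • (t /ₒ (1 : S))) fun m t x => by
    induction x using OreLocalization.ind with
    | c p s =>
      change _ = (m /ₒ (1 : S) * (p /ₒ s)) • _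
      rw [mul_comm, OreLocalization.mul_div_one, OreLocalization.smul_div_one,
        OreLocalization.smul_div_one, mul_smul]

theorem toOreLocalization_mk (t : T) (s : S) :
    toOreLocalization S (mk (locMap S) t (Localization.mk 1 s)) = t /ₒ s := by
  rw [toOreLocalization, lift_mk]
  exact OreLocalization.smul_div_one.trans (by rw [one_smul])

theorem mk_smul_mk_one_mul (t : T) (s c : S) :
    mk (locMap S) ((c : M) • t) (Localization.mk 1 (s * c)) =
      mk (locMap S) t (Localization.mk 1 s) := by
  rw [mk_smul, locMap_mul_mk, ← one_mul (c : M), ← Localization.mk_mul, Localization.mk_self,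
    mul_one]

theorem exists_mk_one_div (x : MTensor (locMap S) T) :
    ∃ t s, x = mk (locMap S) t (Localization.mk 1 s) := by
  obtain ⟨t, n, rfl⟩ := exists_mk _ x
  induction n using Localization.induction_on with
  | H p => exact ⟨p.1 • t, p.2, by rw [mk_smul, locMap_mul_mk]⟩

theorem mk_one_div_eq_iff {t t' : T} {s : S} :
    mk (locMap S) t (Localization.mk 1 s) = mk (locMap S) t' (Localization.mk 1 s) ↔
      ∃ c : S, (c : M) • t = (c : M) • t' := by
  constructor
  · intro h
    have h' := congrArg (toOreLocalization S) h
    rw [toOreLocalization_mk, toOreLocalization_mk, OreLocalization.oreDiv_eq_iff] at h'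
    obtain ⟨u, v, hu, hs⟩ := h'
    refine ⟨u * s, ?_⟩
    calc ((u * s : S) : M) • t = (v * s) • t := by rw [← hs]; rfl
      _ = (s : M) • (u : M) • t' := by rw [mul_comm, mul_smul, ← hu]; rfl
      _ = ((u * s : S) : M) • t' := by rw [smul_smul, mul_comm]; rfl
  · rintro ⟨c, hc⟩
    rw [← mk_smul_mk_one_mul S t s c, hc, mk_smul_mk_one_mul]

theorem exists_common_denom {U : Type} [MulAction M U] (x : MTensor (locMap S) T)
    (y : MTensor (locMap S) U) : ∃ (t : T) (u : U) (s : S),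
      x = mk (locMap S) t (Localization.mk 1 s) ∧ y = mk (locMap S) u (Localization.mk 1 s) := by
  obtain ⟨t, s, rfl⟩ := exists_mk_one_div S x
  obtain ⟨u, s', rfl⟩ := exists_mk_one_div S y
  refine ⟨(s' : M) • t, (s : M) • u, s * s', (mk_smul_mk_one_mul S t s s').symm, ?_⟩
  rw [mul_comm, mk_smul_mk_one_mul]

end MTensor

open MTensor

theorem bijective_tensorProdCompare_locMap (T U : Type) [MulAction M T] [MulAction M U] :
    Function.Bijective (tensorProdCompare (locMap S) T U) := by
  constructor
  · intro z z' h
    obtain ⟨p, p', s, rfl, rfl⟩ := exists_common_denom S z z'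
    simp only [tensorProdCompare_mk, Prod.mk.injEq, mk_one_div_eq_iff] at h
    obtain ⟨⟨c₁, hc₁⟩, ⟨c₂, hc₂⟩⟩ := h
    refine (mk_one_div_eq_iff S).2 ⟨c₁ * c₂, Prod.ext ?_ ?_⟩
    · simp only [Prod.smul_fst, Submonoid.coe_mul, mul_comm (c₁ : M), mul_smul, hc₁]
    · simp only [Prod.smul_snd, Submonoid.coe_mul, mul_smul, hc₂]
  · rintro ⟨x, y⟩
    obtain ⟨t, u, s, rfl, rfl⟩ := exists_common_denom S x y
    exact ⟨mk (locMap S) (t, u) (Localization.mk 1 s), rfl⟩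

theorem subsingleton_mTensor_punit_locMap : Subsingleton (MTensor (locMap S) PUnit) := by
  refine ⟨fun x y => ?_⟩
  obtain ⟨t, t', s, rfl, rfl⟩ := exists_common_denom S x y
  rfl

theorem bijective_tensorEqCompare_locMap {T U : Type} [MulAction M T] [MulAction M U]
    (f g : T →[M] U) : Function.Bijective (tensorEqCompare (locMap S) f g) := by
  constructor
  · intro y y' h
    obtain ⟨e, e', s, rfl, rfl⟩ := exists_common_denom S y y'
    obtain ⟨c, hc⟩ := (mk_one_div_eq_iff S).1 (congrArg Subtype.val h)
    exact (mk_one_div_eq_iff S).2 ⟨c, Subtype.ext hc⟩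
  · rintro ⟨x, hx⟩
    obtain ⟨t, s, rfl⟩ := exists_mk_one_div S x
    obtain ⟨c, hc⟩ := (mk_one_div_eq_iff S).1 hx
    have hct : f ((c : M) • t) = g ((c : M) • t) := by rw [map_smul, map_smul, hc]
    exact ⟨mk (locMap S) ⟨(c : M) • t, hct⟩ (Localization.mk 1 (s * c)),
      Subtype.ext (mk_smul_mk_one_mul S t s c)⟩

theorem monFlat_locMap : MonFlat (locMap S) :=
  ⟨bijective_tensorProdCompare_locMap S, ⟨⟨mk _ PUnit.unit 1⟩, subsingleton_mTensor_punit_locMap S⟩,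
    fun _ _ _ _ => bijective_tensorEqCompare_locMap S⟩

theorem monEpi_locMap : MonEpi (locMap S) :=
  fun _ _ _ _ h => (Localization.monoidOf S).epic_of_localizationMap h

end Localization

section FinitePresentation

theorem CommMonCat.exists_isUnit_map_of_isColimit {J : Type} [SmallCategory J] [IsFiltered J]
    {F : J ⥤ CommMonCat.{0}} {c : Cocone F} (hc : IsColimit c) {i : J} (x : F.obj i)
    (hx : IsUnit ((c.ι.app i).hom x)) : ∃ (j : J) (f : i ⟶ j), IsUnit ((F.map f).hom x) := by
  have hc' := isColimitOfPreserves (forget CommMonCat) hc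
  obtain ⟨b, hb⟩ := isUnit_iff_exists_inv.1 hx
  obtain ⟨j, y, rfl⟩ := Types.jointly_surjective _ hc' b
  let k := IsFiltered.max i j
  have hk : ((forget CommMonCat).mapCocone c).ι.app k
      ((F.map (IsFiltered.leftToMax i j)).hom x * (F.map (IsFiltered.rightToMax i j)).hom y) =
      ((forget CommMonCat).mapCocone c).ι.app k 1 := by
    change (c.ι.app k).hom (_ * _) = (c.ι.app k).hom 1
    rw [map_mul, map_one, ← CommMonCat.comp_apply, ← CommMonCat.comp_apply, c.w, c.w]
    exact hb
  obtain ⟨l, g, hg⟩ := (Types.FilteredColimit.isColimit_eq_iff' hc' _ _).1 hk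
  refine ⟨l, IsFiltered.leftToMax i j ≫ g,
    .of_mul_eq_one ((F.map (IsFiltered.rightToMax i j ≫ g)).hom y) ?_⟩
  change (F.map g).hom (_ * _) = (F.map g).hom 1 at hg
  simpa only [F.map_comp, CommMonCat.comp_apply, map_mul, map_one] using hg

variable {M : Type} [CommMonoid M]

theorem CategoryTheory.Under.w_hom_apply {X Y : Under (CommMonCat.of M)} (f : X ⟶ Y) (m : M) :
    f.right.hom (X.hom.hom m) = Y.hom.hom m :=
  congrArg (fun g : CommMonCat.of M ⟶ Y.right => g.hom m) (Under.w f)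

def locAlg (a : M) : Under (CommMonCat.of M) :=
  Under.mk (CommMonCat.ofHom (locMap (Submonoid.powers a)))

theorem locAlg_hom_ext {a : M} {X : Under (CommMonCat.of M)} (f g : locAlg a ⟶ X) : f = g :=
  Under.UnderMorphism.ext <| CommMonCat.hom_ext <| monEpi_locMap _ _ _ _ <|
    MonoidHom.ext fun m => (Under.w_hom_apply f m).trans (Under.w_hom_apply g m).symm

noncomputable def locAlgHom {a : M} {X : Under (CommMonCat.of M)} (h : IsUnit (X.hom.hom a)) :
    locAlg a ⟶ X :=
  Under.homMk (CommMonCat.ofHom (Submonoid.LocalizationMap.AwayMap.lift a _ h)) <|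
    CommMonCat.hom_ext (Submonoid.LocalizationMap.AwayMap.lift_comp a (Localization.monoidOf _) h)

theorem isUnit_of_locAlg_hom {a : M} {X : Under (CommMonCat.of M)} (f : locAlg a ⟶ X) :
    IsUnit (X.hom.hom a) :=
  Under.w_hom_apply f a ▸ ((Localization.monoidOf _).map_units ⟨a, Submonoid.mem_powers a⟩).map _

theorem monFinitePresentation_locMap (a : M) :
    MonFinitePresentation (locMap (Submonoid.powers a)) := by
  refine ⟨fun J _ _ => ⟨fun {K} => ⟨fun {c} hc => ⟨?_⟩⟩⟩⟩
  have := IsFiltered.isConnected J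
  have hc' := isColimitOfPreserves (Under.forget (CommMonCat.of M)) hc
  refine Types.FilteredColimit.isColimitOf' _ _ (fun x => ?_)
    fun i _ _ _ => ⟨i, 𝟙 i, locAlg_hom_ext _ _⟩
  let i₀ : J := IsFiltered.nonempty.some
  obtain ⟨j, f, hf⟩ := CommMonCat.exists_isUnit_map_of_isColimit hc' ((K.obj i₀).hom.hom a)
    ((Under.w_hom_apply (c.ι.app i₀) a).symm ▸ isUnit_of_locAlg_hom x)
  exact ⟨j, locAlgHom (Under.w_hom_apply (K.map f) a ▸ hf), locAlg_hom_ext _ _⟩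

end FinitePresentation

def MulActionHom.mulRight {M : Type} [CommMonoid M] (u : M) : M →[M] M :=
  ⟨(· * u), fun m p => smul_mul_assoc m p u⟩

namespace MonFlat

open MTensor

variable {M N : Type} [CommMonoid M] [CommMonoid N] {φ : M →* N}

theorem exists_of_mk_eq (hflat : MonFlat φ) {T U : Type} [MulAction M T] [MulAction M U]
    (f g : T →[M] U) {t : T} {n : N} (h : mk φ (f t) n = mk φ (g t) n) :
    ∃ (t' : T) (n' : N), f t' = g t' ∧ mk φ t' n' = mk φ t n := by
  obtain ⟨y, hy⟩ := (hflat.2.2 T U f g).2 ⟨mk φ t n, h⟩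
  obtain ⟨⟨t', ht'⟩, n', rfl⟩ := exists_mk φ y
  exact ⟨t', n', ht', congrArg Subtype.val hy⟩

theorem exists_isUnit_mul_eq (hflat : MonFlat φ) {u v : M} (h : φ u = φ v) :
    ∃ c, IsUnit (φ c) ∧ c * u = c * v := by
  have hmk : mk φ (MulActionHom.mulRight u 1) 1 = mk φ (MulActionHom.mulRight v 1) 1 := by
    change mk φ (1 * u) 1 = mk φ (1 * v) 1
    rw [one_mul, one_mul, mk_eq_mk_one φ u, mk_eq_mk_one φ v, h]
  obtain ⟨c, n, hc, hcn⟩ := hflat.exists_of_mk_eq _ _ hmk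
  rw [mk_eq_mk_one_iff] at hcn
  exact ⟨c, .of_mul_eq_one n hcn, hc⟩

theorem exists_eq_mul_of_mul_eq (hflat : MonFlat φ) {u v : M} {x x' : N} (h : φ u * x = φ v * x') :
    ∃ (z : N) (c c' : M), x = φ c * z ∧ x' = φ c' * z ∧ c * u = c' * v := by
  obtain ⟨p, hp⟩ := (hflat.1 M M).2 (mk φ 1 x, mk φ 1 x')
  obtain ⟨⟨c, c'⟩, z, rfl⟩ := exists_mk φ p
  obtain ⟨hcx, hcx'⟩ := Prod.mk.inj hp
  let f : M × M →[M] M := (MulActionHom.mulRight u).comp (MulActionHom.fst M M M)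
  let g : M × M →[M] M := (MulActionHom.mulRight v).comp (MulActionHom.snd M M M)
  have hmk : mk φ (f (c, c')) z = mk φ (g (c, c')) z := by
    change mk φ (c * u) z = mk φ (c' * v) z
    rw [mk_eq_mk_one φ (c * u), mk_eq_mk_one φ (c' * v), map_mul, map_mul, mul_comm (φ c),
      mul_comm (φ c'), mul_assoc, mul_assoc, (mk_eq_mk_one_iff φ).1 hcx, (mk_eq_mk_one_iff φ).1 hcx', h]
  obtain ⟨⟨d, d'⟩, w, hd, hdw⟩ := hflat.exists_of_mk_eq f g hmk
  obtain ⟨hdx, hdx'⟩ := Prod.mk.inj (congrArg (tensorProdCompare φ M M) hdw)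
  exact ⟨w, d, d', ((mk_eq_mk_one_iff φ).1 (hdx.trans hcx)).symm,
    ((mk_eq_mk_one_iff φ).1 (hdx'.trans hcx')).symm, hd⟩

theorem exists_common_divisor (hflat : MonFlat φ) (n n' : N) :
    ∃ (x : N) (m m' : M), n = φ m * x ∧ n' = φ m' * x := by
  -- `PUnit ⊗_M N` is a point, so `n` and `n'` are joined by a zigzag of generating relations;
  -- flatness is what makes "having a common divisor" transitive.
  suffices H : ∀ p q : PUnit × N, Relation.EqvGen (TensorRel φ PUnit) p q →
      ∃ (x : N) (m m' : M), p.2 = φ m * x ∧ q.2 = φ m' * x from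
    H _ _ (Quotient.exact (hflat.2.1.2.elim (mk φ PUnit.unit n) (mk φ PUnit.unit n')))
  intro p q h
  induction h with
  | rel _ _ h =>
    obtain ⟨m, _, n⟩ := h
    exact ⟨n, 1, m, by rw [map_one, one_mul], rfl⟩
  | refl p => exact ⟨p.2, 1, 1, by rw [map_one, one_mul], by rw [map_one, one_mul]⟩
  | symm _ _ _ ih =>
    obtain ⟨x, m, m', h, h'⟩ := ih
    exact ⟨x, m', m, h', h⟩
  | trans _ _ _ _ _ ih ih' =>
    obtain ⟨x, m₁, m₂, h₁, h₂⟩ := ih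
    obtain ⟨y, m₃, m₄, h₃, h₄⟩ := ih'
    obtain ⟨z, c, c', rfl, rfl, -⟩ := hflat.exists_eq_mul_of_mul_eq (h₂.symm.trans h₃)
    exact ⟨z, m₁ * c, m₄ * c', by rw [h₁, map_mul, mul_assoc], by rw [h₄, map_mul, mul_assoc]⟩

def localizationMap (hflat : MonFlat φ) :
    (Submonoid.comap φ (IsUnit.submonoid N)).LocalizationMap N where
  toMulHom := φ.toMulHom
  isLocalizationMap :=
    { map_units := fun s => s.2
      surj := fun n => by
        obtain ⟨x, m, m', hn, h1⟩ := hflat.exists_common_divisor n 1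
        have hm' : IsUnit (φ m') := .of_mul_eq_one x h1.symm
        exact ⟨(m, ⟨m', hm'⟩), by
          change n * φ m' = φ m
          rw [hn, mul_right_comm, mul_assoc, ← h1, mul_one]⟩
      exists_of_eq := fun h => by
        obtain ⟨c, hc, hcuv⟩ := hflat.exists_isUnit_mul_eq h
        exact ⟨⟨c, hc⟩, hcuv⟩ }

end MonFlat

section Colimit

variable {M : Type} [CommMonoid M]

structure DvdIndex (S : Submonoid M) where
  elt : M
  mem : elt ∈ S

namespace DvdIndex

variable {S : Submonoid M}

instance : Preorder (DvdIndex S) where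
  le a b := a.elt ∣ b.elt
  le_refl a := dvd_refl a.elt
  le_trans _ _ _ := dvd_trans

instance : Nonempty (DvdIndex S) := ⟨⟨1, S.one_mem⟩⟩

instance : IsDirected (DvdIndex S) (· ≤ ·) :=
  ⟨fun a b => ⟨⟨a.elt * b.elt, S.mul_mem a.mem b.mem⟩, dvd_mul_right _ _, dvd_mul_left _ _⟩⟩

end DvdIndex

theorem isUnit_locAlg_of_dvd {a b : M} (h : a ∣ b) : IsUnit ((locAlg b).hom.hom a) :=
  isUnit_of_dvd_unit (map_dvd _ h) (isUnit_of_locAlg_hom (𝟙 (locAlg b)))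

noncomputable def powersDiagram (S : Submonoid M) : DvdIndex S ⥤ Under (CommMonCat.of M) where
  obj a := locAlg a.elt
  map f := locAlgHom (isUnit_locAlg_of_dvd (leOfHom f))
  map_id _ := locAlg_hom_ext _ _
  map_comp _ _ := locAlg_hom_ext _ _

variable {S : Submonoid M} {N : Type} [CommMonoid N]

noncomputable def Submonoid.LocalizationMap.powersCocone (f : S.LocalizationMap N) :
    Cocone (powersDiagram S) where
  pt := Under.mk (CommMonCat.ofHom f.toMonoidHom)
  ι :=
    { app a := locAlgHom (f.map_units ⟨a.elt, a.mem⟩)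
      naturality _ _ _ := locAlg_hom_ext _ _ }

noncomputable def Submonoid.LocalizationMap.isColimitPowersCocone (f : S.LocalizationMap N) :
    IsColimit f.powersCocone where
  desc c := Under.homMk (CommMonCat.ofHom
      (f.lift fun s => isUnit_of_locAlg_hom (c.ι.app ⟨s, s.2⟩)))
    (CommMonCat.hom_ext (f.lift_comp _))
  fac _ _ := locAlg_hom_ext _ _
  uniq _ m _ := Under.UnderMorphism.ext <| CommMonCat.hom_ext <| (f.lift_unique _
    fun x => Under.w_hom_apply m x).symm

end Colimit

theorem exists_mulEquiv_localization_powers {M N : Type} [CommMonoid M] [CommMonoid N]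
    {φ : M →* N} (hflat : MonFlat φ) (hfp : MonFinitePresentation φ) :
    ∃ (a : M) (e : N ≃* Localization (Submonoid.powers a)),
      ∀ m : M, e (φ m) = locMap (Submonoid.powers a) m := by
  let C := hflat.localizationMap.powersCocone
  -- `C.pt` unfolds to `Under.mk (CommMonCat.ofHom φ)`
  have : PreservesFilteredColimits (coyoneda.obj (op C.pt)) := hfp
  have hC : IsColimit ((coyoneda.obj (op C.pt)).mapCocone C) :=
    isColimitOfPreserves (coyoneda.obj (op C.pt)) hflat.localizationMap.isColimitPowersCocone
  obtain ⟨a, σ, hσ⟩ := Types.jointly_surjective _ hC (𝟙 C.pt)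
  let i : C.pt ≅ locAlg a.elt := ⟨σ, C.ι.app a, hσ, locAlg_hom_ext _ _⟩
  exact ⟨a.elt, ((Under.forget _).mapIso i).commMonCatIsoToMulEquiv, Under.w_hom_apply σ⟩

/-- A map of commutative monoids is a flat epimorphism of finite presentation if and
only if it is (isomorphic as an `M`-algebra to) the localization of `M` at a single
element. -/
theorem flat_epi_fp_iff_localization :
    (∀ (M N : Type) [CommMonoid M] [CommMonoid N] (φ : M →* N),
      MonFlat φ → MonEpi φ → MonFinitePresentation φ →
        ∃ (a : M) (e : N ≃* Localization (Submonoid.powers a)),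
          ∀ m : M, e (φ m) = (Localization.monoidOf (Submonoid.powers a)).toMonoidHom m) ∧
    (∀ (M : Type) [CommMonoid M] (a : M),
      MonFlat ((Localization.monoidOf (Submonoid.powers a)).toMonoidHom) ∧
      MonEpi ((Localization.monoidOf (Submonoid.powers a)).toMonoidHom) ∧
      MonFinitePresentation ((Localization.monoidOf (Submonoid.powers a)).toMonoidHom)) :=
  ⟨fun _ _ _ _ _ hflat _ hfp => exists_mulEquiv_localization_powers hflat hfp,
    fun _ _ a => ⟨monFlat_locMap _, monEpi_locMap _, monFinitePresentation_locMap a⟩⟩
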